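/- arXiv:2410.16401 — 3 statements merged into one kernel-verified Lean document; each statement's English description precedes it below -/
import Mathlib

section
/- Assume the coherence assumption with constant μ > 0. Let θ ∈ ℝ^{md}, α' = (α'_1, …, α'_n) ∈ ℝ^n and δ ≥ 0 satisfy ‖DG(θ) − 2 Σ_{i=1}^n α'_i Df_i(θ)‖ ≤ δ. Then for every i ∈ {1,…,n} and j ∈ {1,…,m}: |(φ''(θ_j · x_i) − α'_i) · φ'(θ_j · x_i)| ≤ δ / (2√μ). -/
open scoped RealInnerProductSpace
open Real Filter

noncomputable section

/-- The parameter space ℝ^{md}: m blocks θ_j ∈ ℝ^d, with the Euclidean norm. -/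
abbrev Param (m d : ℕ) : Type := PiLp 2 (fun _ : Fin m => EuclideanSpace ℝ (Fin d))

/-- Network output f_i(θ) = Σ_j φ(θ_j · x_i). -/
def netF {n m d : ℕ} (φ : ℝ → ℝ) (x : Fin n → EuclideanSpace ℝ (Fin d)) (i : Fin n)
    (θ : Param m d) : ℝ := ∑ j, φ ⟪θ j, x i⟫

/-- Euclidean gradient Df_i(θ), with j-th block φ'(θ_j · x_i) x_i. -/
def gradF {n m d : ℕ} (φ : ℝ → ℝ) (x : Fin n → EuclideanSpace ℝ (Fin d)) (i : Fin n)
    (θ : Param m d) : Param m d := WithLp.toLp 2 (fun j => (deriv φ ⟪θ j, x i⟫) • x i)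

/-- Implicit regularizer G(θ) = Σ_i Σ_j φ'(θ_j · x_i)². -/
def regG {n m d : ℕ} (φ : ℝ → ℝ) (x : Fin n → EuclideanSpace ℝ (Fin d))
    (θ : Param m d) : ℝ := ∑ i, ∑ j, (deriv φ ⟪θ j, x i⟫) ^ 2

/-- Euclidean gradient DG(θ), with j-th block Σ_i 2 φ'(θ_j·x_i) φ''(θ_j·x_i) x_i. -/
def gradRegG {n m d : ℕ} (φ : ℝ → ℝ) (x : Fin n → EuclideanSpace ℝ (Fin d))
    (θ : Param m d) : Param m d :=
  WithLp.toLp 2 (fun j => ∑ i, (2 * deriv φ ⟪θ j, x i⟫ * deriv (deriv φ) ⟪θ j, x i⟫) • x i)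

/-- Squared loss L(θ) = Σ_i (f_i(θ) − y_i)². -/
def lossL {n m d : ℕ} (φ : ℝ → ℝ) (x : Fin n → EuclideanSpace ℝ (Fin d)) (y : Fin n → ℝ)
    (θ : Param m d) : ℝ := ∑ i, (netF φ x i θ - y i) ^ 2

/-- Jacobian Df(θ) : ℝ^{md} → ℝ^n, whose i-th row is Df_i(θ). -/
def jacobian {n m d : ℕ} (φ : ℝ → ℝ) (x : Fin n → EuclideanSpace ℝ (Fin d))
    (θ : Param m d) : Param m d →ₗ[ℝ] (Fin n → ℝ) :=
  LinearMap.pi fun i => (innerSL ℝ (gradF φ x i θ)).toLinearMap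

/-- Riemannian gradient ∇G(θ): orthogonal projection of DG(θ) onto ker Df(θ). -/
def rgradG {n m d : ℕ} (φ : ℝ → ℝ) (x : Fin n → EuclideanSpace ℝ (Fin d))
    (θ : Param m d) : Param m d :=
  (Submodule.orthogonalProjectionOnto (LinearMap.ker (jacobian φ x θ)) (gradRegG φ x θ) : Param m d)

/-! The `j`-th block of `DG(θ) − 2 Σᵢ α'ᵢ Dfᵢ(θ)` is the combination `Σᵢ cᵢ xᵢ` with
`cᵢ = 2 (φ''(θⱼ·xᵢ) − α'ᵢ) φ'(θⱼ·xᵢ)`. Coherence bounds each `√μ |cᵢ|` by the norm of that block,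
which is at most the norm of the whole vector, hence at most `δ`. -/

theorem sqrt_mul_abs_le_norm_sum_smul {ι E : Type*} [Fintype ι] [SeminormedAddCommGroup E]
    [NormedSpace ℝ E] {x : ι → E} {μ : ℝ} (hμ : 0 ≤ μ)
    (hcoh : ∀ c : ι → ℝ, μ * ∑ i, c i ^ 2 ≤ ‖∑ i, c i • x i‖ ^ 2) (c : ι → ℝ) (i : ι) :
    √μ * |c i| ≤ ‖∑ k, c k • x k‖ := by
  refine le_of_sq_le_sq ?_ (norm_nonneg _)
  calc (√μ * |c i|) ^ 2 = μ * c i ^ 2 := by rw [mul_pow, sq_sqrt hμ, sq_abs]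
    _ ≤ μ * ∑ k, c k ^ 2 :=
      mul_le_mul_of_nonneg_left (Finset.single_le_sum (fun k _ => sq_nonneg (c k))
        (Finset.mem_univ i)) hμ
    _ ≤ ‖∑ k, c k • x k‖ ^ 2 := hcoh c

theorem gradRegG_sub_two_smul_sum_gradF_apply {n m d : ℕ} (φ : ℝ → ℝ)
    (x : Fin n → EuclideanSpace ℝ (Fin d)) (θ : Param m d) (α : Fin n → ℝ) (j : Fin m) :
    (gradRegG φ x θ - (2 : ℝ) • ∑ i, α i • gradF φ x i θ) j =
      ∑ i, (2 * ((deriv (deriv φ) ⟪θ j, x i⟫ - α i) * deriv φ ⟪θ j, x i⟫)) • x i := by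
  simp only [PiLp.sub_apply, PiLp.smul_apply, WithLp.ofLp_sum, Finset.sum_apply, gradRegG,
    gradF, Finset.smul_sum, smul_smul, ← Finset.sum_sub_distrib, ← sub_smul]
  congr! 2
  ring

theorem stmt_5_general
    (n m d : ℕ)
    (x : Fin n → EuclideanSpace ℝ (Fin d))
    (μ : ℝ) (hμ : 0 < μ)
    (hcoh : ∀ c : Fin n → ℝ, μ * ∑ i, (c i) ^ 2 ≤ ‖∑ i, c i • x i‖ ^ 2)
    (φ : ℝ → ℝ)
    (θ : Param m d) (α : Fin n → ℝ) (δ : ℝ)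
    (happrox : ‖gradRegG φ x θ - (2 : ℝ) • ∑ i, α i • gradF φ x i θ‖ ≤ δ) :
    ∀ i j, |(deriv (deriv φ) ⟪θ j, x i⟫ - α i) * deriv φ ⟪θ j, x i⟫|
      ≤ δ / (2 * Real.sqrt μ) := by
  intro i j
  have hbound : √μ * |2 * ((deriv (deriv φ) ⟪θ j, x i⟫ - α i) * deriv φ ⟪θ j, x i⟫)| ≤ δ :=
    calc _ ≤ ‖∑ k, (2 * ((deriv (deriv φ) ⟪θ j, x k⟫ - α k) * deriv φ ⟪θ j, x k⟫)) • x k‖ :=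
          sqrt_mul_abs_le_norm_sum_smul hμ.le hcoh _ i
      _ = ‖(gradRegG φ x θ - (2 : ℝ) • ∑ i, α i • gradF φ x i θ) j‖ := by
          rw [gradRegG_sub_two_smul_sum_gradF_apply]
      _ ≤ ‖gradRegG φ x θ - (2 : ℝ) • ∑ i, α i • gradF φ x i θ‖ := PiLp.norm_apply_le _ j
      _ ≤ δ := happrox
  rw [abs_mul, abs_two] at hbound
  rw [le_div_iff₀ (by positivity)]
  linarith

/-- approximate stationarity ‖DG(θ) − 2 Σ_i α'_i Df_i(θ)‖ ≤ δ implies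
|(φ''(θ_j·x_i) − α'_i)·φ'(θ_j·x_i)| ≤ δ/(2√μ) for all i, j. -/
theorem stmt_5
    (n m d : ℕ) (hn : 1 ≤ n) (hm : 1 ≤ m) (hd : 1 ≤ d)
    (x : Fin n → EuclideanSpace ℝ (Fin d)) (hx : ∀ i, ‖x i‖ = 1)
    (μ : ℝ) (hμ : 0 < μ)
    (hcoh : ∀ c : Fin n → ℝ, μ * ∑ i, (c i) ^ 2 ≤ ‖∑ i, c i • x i‖ ^ 2)
    (φ : ℝ → ℝ) (hφ : ContDiff ℝ (⊤ : ℕ∞) φ)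
    (θ : Param m d) (α : Fin n → ℝ) (δ : ℝ) (hδ : 0 ≤ δ)
    (happrox : ‖gradRegG φ x θ - (2 : ℝ) • ∑ i, α i • gradF φ x i θ‖ ≤ δ) :
    ∀ i j, |(deriv (deriv φ) ⟪θ j, x i⟫ - α i) * deriv φ ⟪θ j, x i⟫|
      ≤ δ / (2 * Real.sqrt μ) :=
  stmt_5_general n m d x μ hμ hcoh φ θ α δ happrox
end
end

section
/- Let φ be infinitely differentiable with φ'(z) ≥ ρ1 and φ'''(z) ≥ ρ2 for all z ∈ ℝ, where ρ1, ρ2 > 0, satisfying β-normality with constant β > 0, and assume the coherence assumption with constant μ > 0. Let θ : [0, ∞) → ℝ^{md} be a Riemannian gradient-flow trajectory of G on the zero-loss set, and suppose at some time t0 ≥ 0 that ‖∇G(θ(t0))‖ ≤ √μ · β. Then for all t ≥ t0: ‖∇G(θ(t))‖² ≤ ‖∇G(θ(t0))‖² · e^{−(t − t0) ρ1 ρ2 μ}. -/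
open scoped RealInnerProductSpace
open Real Filter

noncomputable section

/-!
Write `V = ∇G(θ) = DG - ∑ λᵢ Dfᵢ`, the multipliers `λ` being given by the Gram matrix of the
`Dfᵢ`, which coherence and `φ' ≥ ρ₁` make invertible. Along the flow `θ' = -V`, differentiating
`‖V‖² = ⟪DG, V⟫` and the constraints `⟪Dfᵢ, V⟫ = 0` gives `(‖V‖²)' = -2 Hess(G - ∑ λᵢ fᵢ)[V, V]`.
The blocks of `V` are `Vⱼ = ∑ᵢ (2φ'φ'' - λᵢφ')(θⱼ·xᵢ) xᵢ`, so while `‖V‖² ≤ μβ²` coherence bounds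
their coefficients by `β`; β-normality then makes every coefficient of the Hessian at least
`ρ₁ρ₂`, and coherence once more gives `Hess[V, V] ≥ ρ₁ρ₂μ ‖V‖²`. Thus `‖V‖²` decays at rate
`2ρ₁ρ₂μ` as long as it stays below `μβ²`, and a barrier argument shows that it never leaves.
-/

-- The gap `c' < c` makes the barrier strictly steeper than `f` wherever they touch.
theorem le_mul_exp_of_hasDerivAt_le_neg_mul {f f' : ℝ → ℝ} {a δ M c c' : ℝ}
    (hf : ∀ s, a ≤ s → HasDerivAt f (f' s) s)
    (hdecay : ∀ s, a ≤ s → f s ≤ M → f' s ≤ -c * f s)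
    (hc' : 0 ≤ c') (hc'c : c' < c) (hfa : f a ≤ δ) (hδ : 0 < δ) (hδM : δ ≤ M)
    {s : ℝ} (hs : a ≤ s) :
    f s ≤ δ * exp (-((s - a) * c')) := by
  set B : ℝ → ℝ := fun s => δ * exp (-((s - a) * c'))
  have hB : ∀ s, HasDerivAt B (-c' * B s) s := fun s => by
    have hlin : HasDerivAt (fun s => -((s - a) * c')) (-c') s := by
      simpa using (((hasDerivAt_id' s).sub_const a).mul_const c').fun_neg
    exact (hlin.exp.const_mul δ).congr_deriv (by ring)
  refine image_le_of_deriv_right_lt_deriv_boundary (f := f) (B := B)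
    (fun s hs => (hf s hs.1).continuousAt.continuousWithinAt)
    (fun s hs => (hf s hs.1).hasDerivWithinAt) (by simpa [B] using hfa) hB ?_ ⟨hs, le_rfl⟩
  intro s hs hfB
  have hBpos : 0 < B s := by positivity
  have hBδ : B s ≤ δ :=
    mul_le_of_le_one_right hδ.le (exp_le_one_iff.2 (by nlinarith [hs.1]))
  calc f' s ≤ -c * f s := hdecay s hs.1 (hfB ▸ hBδ.trans hδM)
    _ = -c * B s := by rw [hfB]
    _ < -c' * B s := by nlinarith

theorem le_mul_exp_of_hasDerivAt_le_neg_mul_of_nonneg {f f' : ℝ → ℝ} {a M c c' : ℝ}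
    (hf : ∀ s, a ≤ s → HasDerivAt f (f' s) s)
    (hdecay : ∀ s, a ≤ s → f s ≤ M → f' s ≤ -c * f s)
    (hc' : 0 ≤ c') (hc'c : c' < c) (hf0 : ∀ s, 0 ≤ f s) (hM : 0 < M) (hfa : f a ≤ M)
    {s : ℝ} (hs : a ≤ s) :
    f s ≤ f a * exp (-((s - a) * c')) := by
  rcases (hf0 a).lt_or_eq with hpos | hzero
  · exact le_mul_exp_of_hasDerivAt_le_neg_mul hf hdecay hc' hc'c le_rfl hpos hfa hs
  · -- when `f a = 0`, compare with every small positive level instead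
    rw [← hzero, zero_mul]
    by_contra! hfs
    have hδ : 0 < min M (f s / 2) := lt_min hM (half_pos hfs)
    have hle := le_mul_exp_of_hasDerivAt_le_neg_mul hf hdecay hc' hc'c (hzero ▸ hδ.le) hδ
      (min_le_left _ _) hs
    have hexp : exp (-((s - a) * c')) ≤ 1 := exp_le_one_iff.2 (by nlinarith)
    nlinarith [min_le_right M (f s / 2)]

section Residual

variable {E ι : Type*} [NormedAddCommGroup E] [InnerProductSpace ℝ E] [Fintype ι]

theorem hasDerivAt_norm_sq_of_eq_sub_sum {V g : ℝ → E} {u : ι → ℝ → E} {c : ι → ℝ → ℝ}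
    {V' g' : E} {u' : ι → E} {t : ℝ}
    (hV : ∀ s, V s = g s - ∑ i, c i s • u i s) (horth : ∀ s i, ⟪u i s, V s⟫ = 0)
    (hVt : HasDerivAt V V' t) (hg : HasDerivAt g g' t) (hu : ∀ i, HasDerivAt (u i) (u' i) t) :
    HasDerivAt (fun s => ‖V s‖ ^ 2) (2 * (⟪g', V t⟫ - ∑ i, c i t * ⟪u' i, V t⟫)) t := by
  have hgV : ∀ s, g s = V s + ∑ i, c i s • u i s := fun s => by rw [hV s, sub_add_cancel]
  have hnorm : (fun s => ‖V s‖ ^ 2) = fun s => ⟪g s, V s⟫ := funext fun s => by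
    simp [hgV s, inner_add_left, sum_inner, real_inner_smul_left, horth]
  have hgV' : ⟪g t, V'⟫ + ⟪g', V t⟫ = 2 * ⟪V t, V'⟫ :=
    ((hnorm ▸ hg.inner ℝ hVt).unique hVt.norm_sq)
  -- differentiating `⟪u i s, V s⟫ = 0` moves the derivative from `V` onto `u i`
  have huV' : ∀ i, ⟪u i t, V'⟫ = -⟪u' i, V t⟫ := fun i => by
    have h0 : HasDerivAt (fun s => ⟪u i s, V s⟫) 0 t := by
      simpa only [horth] using hasDerivAt_const t (0 : ℝ)
    linarith [((hu i).inner ℝ hVt).unique h0]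
  have hgt : ⟪g t, V'⟫ = ⟪V t, V'⟫ - ∑ i, c i t * ⟪u' i, V t⟫ := by
    simp [hgV t, inner_add_left, sum_inner, real_inner_smul_left, huV', sub_eq_add_neg]
  convert hVt.norm_sq using 1
  linarith

end Residual

section GramProjection

open scoped Matrix

variable {E ι : Type*} [NormedAddCommGroup E] [InnerProductSpace ℝ E]

theorem mem_ker_pi_innerSL {u : ι → E} {w : E} :
    w ∈ LinearMap.ker (LinearMap.pi fun i => (innerSL ℝ (u i)).toLinearMap) ↔
      ∀ i, ⟪u i, w⟫ = 0 := by
  simp [funext_iff]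

variable [Fintype ι]

theorem orthogonalProjectionOnto_ker_pi_innerSL [FiniteDimensional ℝ E] {u : ι → E} {g : E}
    {c : ι → ℝ} (horth : ∀ i, ⟪u i, g - ∑ k, c k • u k⟫ = 0) :
    ((LinearMap.ker (LinearMap.pi fun i => (innerSL ℝ (u i)).toLinearMap)).orthogonalProjectionOnto
      g : E) = g - ∑ k, c k • u k := by
  rw [← Submodule.starProjection_apply]
  refine Submodule.eq_starProjection_of_mem_of_inner_eq_zero (mem_ker_pi_innerSL.2 horth)
    fun w hw => ?_
  simp [sum_inner, real_inner_smul_left, mem_ker_pi_innerSL.1 hw]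

variable [DecidableEq ι]

/-- The coefficients of the orthogonal projection of `g` onto the span of the `u i`. -/
def gramCoeffs (u : ι → E) (g : E) : ι → ℝ :=
  (Matrix.gram ℝ u)⁻¹ *ᵥ fun i => ⟪u i, g⟫

theorem inner_sub_sum_gramCoeffs {u : ι → E} (hu : LinearIndependent ℝ u) (g : E) (i : ι) :
    ⟪u i, g - ∑ k, gramCoeffs u g k • u k⟫ = 0 := by
  have hdet := (Matrix.det_gram_ne_zero_iff_linearIndependent (𝕜 := ℝ)).2 hu
  have hsolve : Matrix.gram ℝ u *ᵥ gramCoeffs u g = fun i => ⟪u i, g⟫ := by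
    rw [gramCoeffs, Matrix.mulVec_mulVec, Matrix.mul_nonsing_inv _ hdet.isUnit,
      Matrix.one_mulVec]
  have hi := congrFun hsolve i
  simp only [Matrix.mulVec, dotProduct, Matrix.gram_apply] at hi
  simp_rw [inner_sub_right, inner_sum, real_inner_smul_right, mul_comm (gramCoeffs u g _), hi,
    sub_self]

variable {F : Type*} [NormedAddCommGroup F] [NormedSpace ℝ F]

attribute [local instance] Matrix.linftyOpNormedRing Matrix.linftyOpNormedAlgebra in
theorem DifferentiableAt.matrix_inv_apply {A : F → Matrix ι ι ℝ} {p : F}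
    (hA : ∀ i j, DifferentiableAt ℝ (fun q => A q i j) p) (hdet : (A p).det ≠ 0) (i j : ι) :
    DifferentiableAt ℝ (fun q => (A q)⁻¹ i j) p := by
  have hA' : DifferentiableAt ℝ A p :=
    differentiableAt_pi.2 fun i => differentiableAt_pi.2 (hA i)
  have hinv : DifferentiableAt ℝ (fun q => (A q)⁻¹) p := by
    simp_rw [Matrix.nonsing_inv_eq_ringInverse]
    exact (differentiableAt_inverse ((A p).isUnit_iff_isUnit_det.2 hdet.isUnit)).comp p hA'
  exact differentiableAt_pi.1 (differentiableAt_pi.1 hinv i) j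

theorem DifferentiableAt.gramCoeffs {u : F → ι → E} {g : F → E} {p : F}
    (hu : ∀ i, DifferentiableAt ℝ (fun q => u q i) p) (hg : DifferentiableAt ℝ g p)
    (hli : LinearIndependent ℝ (u p)) (k : ι) :
    DifferentiableAt ℝ (fun q => gramCoeffs (u q) (g q) k) p := by
  have hdet := (Matrix.det_gram_ne_zero_iff_linearIndependent (𝕜 := ℝ)).2 hli
  change DifferentiableAt ℝ (fun q => ∑ l, (Matrix.gram ℝ (u q))⁻¹ k l * ⟪u q l, g q⟫) p
  exact DifferentiableAt.fun_sum fun l _ =>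
    (DifferentiableAt.matrix_inv_apply (fun i j => (hu i).inner ℝ (hu j)) hdet k l).mul
      ((hu l).inner ℝ hg)

end GramProjection

section Coherence

variable {E ι : Type*} [NormedAddCommGroup E] [InnerProductSpace ℝ E] [Fintype ι]
  {x : ι → E} {μ : ℝ}

theorem linearIndependent_of_coherence (hμ : 0 < μ)
    (hcoh : ∀ c : ι → ℝ, μ * ∑ i, c i ^ 2 ≤ ‖∑ i, c i • x i‖ ^ 2) : LinearIndependent ℝ x := by
  refine Fintype.linearIndependent_iff.2 fun c hc i => ?_
  have hsum : ∑ i, c i ^ 2 = 0 := by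
    have := hcoh c
    rw [hc, norm_zero] at this
    exact le_antisymm (by nlinarith) (Finset.sum_nonneg fun i _ => sq_nonneg _)
  exact pow_eq_zero_iff two_ne_zero |>.1 <|
    (Finset.sum_eq_zero_iff_of_nonneg fun i _ => sq_nonneg (c i)).1 hsum i (Finset.mem_univ i)

theorem abs_le_of_coherence (hμ : 0 < μ)
    (hcoh : ∀ c : ι → ℝ, μ * ∑ i, c i ^ 2 ≤ ‖∑ i, c i • x i‖ ^ 2) {β : ℝ} (hβ : 0 ≤ β)
    {c : ι → ℝ} (hc : ‖∑ i, c i • x i‖ ^ 2 ≤ μ * β ^ 2) (i : ι) : |c i| ≤ β := by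
  have hi : c i ^ 2 ≤ ∑ k, c k ^ 2 :=
    Finset.single_le_sum (f := fun k => c k ^ 2) (fun k _ => sq_nonneg _) (Finset.mem_univ i)
  refine abs_le_of_sq_le_sq (le_of_mul_le_mul_left ?_ hμ) hβ
  linarith [hcoh c, mul_le_mul_of_nonneg_left hi hμ.le]

theorem mul_norm_sq_le_sum_inner_sq
    (hcoh : ∀ c : ι → ℝ, μ * ∑ i, c i ^ 2 ≤ ‖∑ i, c i • x i‖ ^ 2) (c : ι → ℝ) :
    μ * ‖∑ i, c i • x i‖ ^ 2 ≤ ∑ i, ⟪x i, ∑ k, c k • x k⟫ ^ 2 := by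
  set v := ∑ i, c i • x i
  have hv : ‖v‖ ^ 2 = ∑ i, c i * ⟪x i, v⟫ := by
    rw [← real_inner_self_eq_norm_sq]
    simp only [v, sum_inner, real_inner_smul_left]
  have hcs : (∑ i, c i * ⟪x i, v⟫) ^ 2 ≤ (∑ i, c i ^ 2) * ∑ i, ⟪x i, v⟫ ^ 2 :=
    Finset.sum_mul_sq_le_sq_mul_sq _ _ _
  have hS : 0 ≤ ∑ i, ⟪x i, v⟫ ^ 2 := Finset.sum_nonneg fun i _ => sq_nonneg _
  have hcv : μ * ∑ i, c i ^ 2 ≤ ‖v‖ ^ 2 := hcoh c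
  rcases le_or_gt μ 0 with hμ | hμ
  · nlinarith [sq_nonneg ‖v‖]
  rcases (sq_nonneg ‖v‖).lt_or_eq with hpos | hzero
  · refine le_of_mul_le_mul_left ?_ hpos
    rw [← hv] at hcs
    nlinarith [mul_le_mul_of_nonneg_right hcv hS]
  · rw [← hzero, mul_zero]
    exact hS

end Coherence

theorem hasDerivAt_toLp {ι : Type*} [Fintype ι] {β : ι → Type*}
    [∀ i, NormedAddCommGroup (β i)] [∀ i, NormedSpace ℝ (β i)] {F : ℝ → ∀ i, β i}
    {F' : ∀ i, β i} {t : ℝ} (h : ∀ i, HasDerivAt (fun s => F s i) (F' i) t) :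
    HasDerivAt (fun s => WithLp.toLp 2 (F s)) (WithLp.toLp 2 F') t := by
  exact (PiLp.hasFDerivAt_toLp (𝕜 := ℝ) (E := β) 2 (F t)).comp_hasDerivAt t (hasDerivAt_pi.2 h)

/-- With `a = φ'`, `b = φ''`, `g = φ'''`: normality absorbs the multiplier term, since
`a * (2 (b² + a g) - l b) = 2 a² g + b (2 a b - l a)`. -/
theorem mul_le_hessian_coeff_of_normal {a b g l β ρ₁ ρ₂ : ℝ} (hρ₁ : 0 < ρ₁) (hρ₂ : 0 ≤ ρ₂)
    (ha : ρ₁ ≤ a) (hg : ρ₂ ≤ g) (hnormal : β * |b| ≤ a ^ 2 * g) (hl : |2 * a * b - l * a| ≤ β) :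
    ρ₁ * ρ₂ ≤ 2 * (b ^ 2 + a * g) - l * b := by
  have ha₀ : 0 < a := hρ₁.trans_le ha
  have hb : -(β * |b|) ≤ b * (2 * a * b - l * a) := by
    have := mul_le_mul_of_nonneg_right hl (abs_nonneg b)
    rw [← abs_mul, mul_comm] at this
    linarith [neg_abs_le (b * (2 * a * b - l * a))]
  have hag : ρ₁ * ρ₂ ≤ a * g := mul_le_mul ha hg hρ₂ ha₀.le
  refine le_of_mul_le_mul_left ?_ ha₀
  nlinarith [mul_le_mul_of_nonneg_left hag ha₀.le, sq_nonneg b]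

section Network

variable {n m d : ℕ} {φ : ℝ → ℝ} {x : Fin n → EuclideanSpace ℝ (Fin d)} {μ ρ₁ ρ₂ β : ℝ}

-- The default instance search for this takes over ten seconds.
theorem Param.continuousSMul : ContinuousSMul ℝ (Param m d) := IsBoundedSMul.continuousSMul

attribute [local instance] Param.continuousSMul

theorem HasDerivAt.inner_apply_const {θ : ℝ → Param m d} {θ' : Param m d} {t : ℝ}
    (hθ : HasDerivAt θ θ' t) (j : Fin m) (v : EuclideanSpace ℝ (Fin d)) :
    HasDerivAt (fun s => ⟪θ s j, v⟫) ⟪θ' j, v⟫ t := by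
  have hj := (PiLp.hasFDerivAt_apply (𝕜 := ℝ) 2 (θ t) j).comp_hasDerivAt t hθ
  simpa using hj.inner ℝ (hasDerivAt_const t v)

theorem inner_toLp_smul (a : Fin m → ℝ) (v : EuclideanSpace ℝ (Fin d)) (w : Param m d) :
    ⟪(WithLp.toLp 2 fun j => a j • v : Param m d), w⟫ = ∑ j, a j * ⟪v, w j⟫ := by
  rw [PiLp.inner_apply]
  exact Finset.sum_congr rfl fun j _ => real_inner_smul_left _ _ _


theorem linearIndependent_gradF (hx : LinearIndependent ℝ x) (hφ' : ∀ z, deriv φ z ≠ 0)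
    (j₀ : Fin m) (θ : Param m d) : LinearIndependent ℝ fun i => gradF φ x i θ := by
  refine Fintype.linearIndependent_iff.2 fun c hc i => ?_
  have hblock : ∑ i, (c i * deriv φ ⟪θ j₀, x i⟫) • x i = 0 := by
    have := congrArg (fun v : Param m d => v j₀) hc
    simpa [WithLp.ofLp_sum, gradF, smul_smul] using this
  exact (mul_eq_zero.1 (Fintype.linearIndependent_iff.1 hx _ hblock i)).resolve_right (hφ' _)

variable (φ x) in
/-- The Lagrange multipliers `λ` of `∇G = DG - ∑ λ_i Df_i`. -/
def rgradCoeffs (θ : Param m d) : Fin n → ℝ :=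
  gramCoeffs (fun i => gradF φ x i θ) (gradRegG φ x θ)

theorem rgradG_eq_sub_sum {θ : Param m d} (hli : LinearIndependent ℝ fun i => gradF φ x i θ) :
    rgradG φ x θ = gradRegG φ x θ - ∑ i, rgradCoeffs φ x θ i • gradF φ x i θ :=
  orthogonalProjectionOnto_ker_pi_innerSL (inner_sub_sum_gramCoeffs hli _)

theorem inner_gradF_rgradG (i : Fin n) (θ : Param m d) : ⟪gradF φ x i θ, rgradG φ x θ⟫ = 0 :=
  mem_ker_pi_innerSL.1
    ((LinearMap.ker (jacobian φ x θ)).orthogonalProjectionOnto (gradRegG φ x θ)).2 i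

theorem rgradG_apply {θ : Param m d} (hli : LinearIndependent ℝ fun i => gradF φ x i θ)
    (j : Fin m) :
    rgradG φ x θ j = ∑ i, (2 * deriv φ ⟪θ j, x i⟫ * deriv (deriv φ) ⟪θ j, x i⟫
      - rgradCoeffs φ x θ i * deriv φ ⟪θ j, x i⟫) • x i := by
  rw [rgradG_eq_sub_sum hli]
  simp [gradRegG, gradF, WithLp.ofLp_sum, sub_smul, smul_smul, Finset.sum_sub_distrib]

variable (φ x) in
/-- `Hess (G - ∑ cᵢ fᵢ) (θ) [v, v]`, using `(φ' ^ 2)'' = 2 (φ'' ^ 2 + φ' φ''')`. -/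
def lagrangianHessian (c : Fin n → ℝ) (θ v : Param m d) : ℝ :=
  ∑ i, ∑ j, (2 * (deriv (deriv φ) ⟪θ j, x i⟫ ^ 2
    + deriv φ ⟪θ j, x i⟫ * deriv (deriv (deriv φ)) ⟪θ j, x i⟫)
    - c i * deriv (deriv φ) ⟪θ j, x i⟫) * ⟪x i, v j⟫ ^ 2

section Curve

variable {θ : ℝ → Param m d} {θ' : Param m d} {t : ℝ}

theorem hasDerivAt_gradF (hφ₁ : Differentiable ℝ (deriv φ)) (hθ : HasDerivAt θ θ' t)
    (i : Fin n) :
    HasDerivAt (fun s => gradF φ x i (θ s))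
      (WithLp.toLp 2 fun j => (deriv (deriv φ) ⟪θ t j, x i⟫ * ⟪θ' j, x i⟫) • x i) t :=
  hasDerivAt_toLp fun j =>
    ((hφ₁ _).hasDerivAt.comp t (hθ.inner_apply_const j (x i))).smul_const (x i)

theorem gradRegG_eq_sum (θ : Param m d) :
    gradRegG φ x θ = ∑ i, WithLp.toLp 2 fun j =>
      (2 * deriv φ ⟪θ j, x i⟫ * deriv (deriv φ) ⟪θ j, x i⟫) • x i := by
  ext j : 1
  simp [gradRegG, WithLp.ofLp_sum]

theorem hasDerivAt_gradRegG (hφ₁ : Differentiable ℝ (deriv φ))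
    (hφ₂ : Differentiable ℝ (deriv (deriv φ))) (hθ : HasDerivAt θ θ' t) :
    HasDerivAt (fun s => gradRegG φ x (θ s))
      (∑ i, WithLp.toLp 2 fun j => (2 * (deriv (deriv φ) ⟪θ t j, x i⟫ ^ 2
        + deriv φ ⟪θ t j, x i⟫ * deriv (deriv (deriv φ)) ⟪θ t j, x i⟫) * ⟪θ' j, x i⟫) • x i) t := by
  simp_rw [gradRegG_eq_sum]
  refine HasDerivAt.fun_sum fun i _ => hasDerivAt_toLp fun j => HasDerivAt.smul_const ?_ (x i)
  have hz := hθ.inner_apply_const j (x i)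
  exact ((((hφ₁ _).hasDerivAt.comp t hz).const_mul 2).mul ((hφ₂ _).hasDerivAt.comp t hz)).congr_deriv
    (by simp only [Function.comp_apply]; ring)

theorem hasDerivAt_norm_sq_rgradG (hφ₁ : Differentiable ℝ (deriv φ))
    (hφ₂ : Differentiable ℝ (deriv (deriv φ)))
    (hli : ∀ θ : Param m d, LinearIndependent ℝ fun i => gradF φ x i θ)
    (hθ : HasDerivAt θ (-rgradG φ x (θ t)) t) :
    HasDerivAt (fun s => ‖rgradG φ x (θ s)‖ ^ 2)
      (-2 * lagrangianHessian φ x (rgradCoeffs φ x (θ t)) (θ t) (rgradG φ x (θ t))) t := by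
  have hF := hasDerivAt_gradF (x := x) hφ₁ hθ
  have hG := hasDerivAt_gradRegG (x := x) hφ₁ hφ₂ hθ
  have hV : ∀ s, rgradG φ x (θ s)
      = gradRegG φ x (θ s) - ∑ i, rgradCoeffs φ x (θ s) i • gradF φ x i (θ s) :=
    fun s => rgradG_eq_sub_sum (hli _)
  have hVdiff : DifferentiableAt ℝ (fun s => rgradG φ x (θ s)) t := by
    simp_rw [hV]
    exact hG.differentiableAt.sub <| DifferentiableAt.fun_sum fun i _ =>
      (DifferentiableAt.gramCoeffs (fun k => (hF k).differentiableAt) hG.differentiableAt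
        (hli _) i).smul (hF i).differentiableAt
  convert hasDerivAt_norm_sq_of_eq_sub_sum hV (fun s i => inner_gradF_rgradG i (θ s))
    hVdiff.hasDerivAt hG hF using 1
  simp only [lagrangianHessian, sum_inner, inner_toLp_smul, Finset.mul_sum,
    ← Finset.sum_sub_distrib]
  refine Finset.sum_congr rfl fun i _ => Finset.sum_congr rfl fun j _ => ?_
  rw [PiLp.neg_apply, inner_neg_left, real_inner_comm (x i) (rgradG φ x (θ t) j)]
  ring

end Curve


theorem mul_norm_sq_le_lagrangianHessian (hμ : 0 < μ)
    (hcoh : ∀ c : Fin n → ℝ, μ * ∑ i, c i ^ 2 ≤ ‖∑ i, c i • x i‖ ^ 2)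
    (hρ₁ : 0 < ρ₁) (hρ₂ : 0 ≤ ρ₂) (hφ' : ∀ z, ρ₁ ≤ deriv φ z)
    (hφ''' : ∀ z, ρ₂ ≤ deriv (deriv (deriv φ)) z) (hβ : 0 ≤ β)
    (hnormal : ∀ z, β * |deriv (deriv φ) z| ≤ deriv φ z ^ 2 * deriv (deriv (deriv φ)) z)
    {θ : Param m d} (hli : LinearIndependent ℝ fun i => gradF φ x i θ)
    (hsmall : ‖rgradG φ x θ‖ ^ 2 ≤ μ * β ^ 2) :
    ρ₁ * ρ₂ * μ * ‖rgradG φ x θ‖ ^ 2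
      ≤ lagrangianHessian φ x (rgradCoeffs φ x θ) θ (rgradG φ x θ) := by
  have hcoeff : ∀ i j, ρ₁ * ρ₂ ≤ 2 * (deriv (deriv φ) ⟪θ j, x i⟫ ^ 2
      + deriv φ ⟪θ j, x i⟫ * deriv (deriv (deriv φ)) ⟪θ j, x i⟫)
      - rgradCoeffs φ x θ i * deriv (deriv φ) ⟪θ j, x i⟫ := fun i j => by
    have hj : ‖rgradG φ x θ j‖ ^ 2 ≤ μ * β ^ 2 :=
      (pow_le_pow_left₀ (norm_nonneg _) (PiLp.norm_apply_le _ j) 2).trans hsmall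
    rw [rgradG_apply hli j] at hj
    exact mul_le_hessian_coeff_of_normal hρ₁ hρ₂ (hφ' _) (hφ''' _) (hnormal _)
      (abs_le_of_coherence hμ hcoh hβ hj i)
  have hframe : ∀ j, μ * ‖rgradG φ x θ j‖ ^ 2 ≤ ∑ i, ⟪x i, rgradG φ x θ j⟫ ^ 2 := fun j => by
    rw [rgradG_apply hli j]
    exact mul_norm_sq_le_sum_inner_sq hcoh _
  calc ρ₁ * ρ₂ * μ * ‖rgradG φ x θ‖ ^ 2 = ρ₁ * ρ₂ * ∑ j, μ * ‖rgradG φ x θ j‖ ^ 2 := by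
        rw [PiLp.norm_sq_eq_of_L2, ← Finset.mul_sum, mul_assoc]
    _ ≤ ρ₁ * ρ₂ * ∑ j, ∑ i, ⟪x i, rgradG φ x θ j⟫ ^ 2 := by
        gcongr with j
        exact hframe j
    _ = ∑ i, ∑ j, ρ₁ * ρ₂ * ⟪x i, rgradG φ x θ j⟫ ^ 2 := by
        rw [Finset.sum_comm, Finset.mul_sum]
        simp only [Finset.mul_sum]
    _ ≤ lagrangianHessian φ x (rgradCoeffs φ x θ) θ (rgradG φ x θ) := by
        unfold lagrangianHessian
        gcongr with i _ j _
        exact hcoeff i j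

end Network

set_option maxHeartbeats 2000000 in
set_option synthInstance.maxHeartbeats 400000 in
theorem stmt_14_general
    (n m d : ℕ) (hm : 1 ≤ m)
    (x : Fin n → EuclideanSpace ℝ (Fin d))
    (μ : ℝ) (hμ : 0 < μ)
    (hcoh : ∀ c : Fin n → ℝ, μ * ∑ i, (c i) ^ 2 ≤ ‖∑ i, c i • x i‖ ^ 2)
    (φ : ℝ → ℝ) (hφ : ContDiff ℝ (⊤ : ℕ∞) φ)
    (ρ1 ρ2 : ℝ) (hρ1 : 0 < ρ1) (hρ2 : 0 < ρ2)
    (hφ' : ∀ z, ρ1 ≤ deriv φ z)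
    (hφ''' : ∀ z, ρ2 ≤ deriv (deriv (deriv φ)) z)
    (β : ℝ) (hβ : 0 < β)
    (hnormal : ∀ z, β * |deriv (deriv φ) z| ≤ (deriv φ z) ^ 2 * deriv (deriv (deriv φ)) z)
    (θt : ℝ → Param m d)
    (hflow : ∀ t, 0 ≤ t → HasDerivAt θt (-(rgradG φ x (θt t))) t)
    (t0 : ℝ) (ht0 : 0 ≤ t0)
    (hsmall : ‖rgradG φ x (θt t0)‖ ≤ Real.sqrt μ * β) :
    ∀ t, t0 ≤ t →
      ‖rgradG φ x (θt t)‖ ^ 2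
        ≤ ‖rgradG φ x (θt t0)‖ ^ 2 * Real.exp (-((t - t0) * (ρ1 * ρ2 * μ))) := by
  have hli : ∀ θ : Param m d, LinearIndependent ℝ fun i => gradF φ x i θ :=
    linearIndependent_gradF (linearIndependent_of_coherence hμ hcoh)
      (fun z => (hρ1.trans_le (hφ' z)).ne') ⟨0, hm⟩
  have hsmall_sq : ‖rgradG φ x (θt t0)‖ ^ 2 ≤ μ * β ^ 2 :=
    calc _ ≤ (√μ * β) ^ 2 := pow_le_pow_left₀ (norm_nonneg _) hsmall 2
      _ = μ * β ^ 2 := by rw [mul_pow, sq_sqrt hμ.le]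
  have hφ₁ : Differentiable ℝ (deriv φ) := (hφ.iterate_deriv 1).differentiable (by simp)
  have hφ₂ : Differentiable ℝ (deriv (deriv φ)) := (hφ.iterate_deriv 2).differentiable (by simp)
  have hrate : 0 < ρ1 * ρ2 * μ := by positivity
  intro t ht
  refine le_mul_exp_of_hasDerivAt_le_neg_mul_of_nonneg (c := 2 * (ρ1 * ρ2 * μ))
    (fun s hs => hasDerivAt_norm_sq_rgradG hφ₁ hφ₂ hli (hflow s (ht0.trans hs)))
    (fun s _ hs => ?_)
    hrate.le (by linarith) (fun s => sq_nonneg _) (by positivity) hsmall_sq ht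
  linarith [mul_norm_sq_le_lagrangianHessian hμ hcoh hρ1 hρ2.le hφ' hφ''' hβ.le hnormal (hli _) hs]

set_option maxHeartbeats 2000000 in
set_option synthInstance.maxHeartbeats 400000 in
/-- once the Riemannian gradient is ≤ √μ·β, its squared norm decays
exponentially: ‖∇G(θ(t))‖² ≤ ‖∇G(θ(t0))‖² e^{−(t−t0)ρ1ρ2μ} for t ≥ t0. -/
theorem stmt_14
    (n m d : ℕ) (hn : 1 ≤ n) (hm : 1 ≤ m) (hd : 1 ≤ d)
    (x : Fin n → EuclideanSpace ℝ (Fin d)) (hx : ∀ i, ‖x i‖ = 1)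
    (μ : ℝ) (hμ : 0 < μ)
    (hcoh : ∀ c : Fin n → ℝ, μ * ∑ i, (c i) ^ 2 ≤ ‖∑ i, c i • x i‖ ^ 2)
    (y : Fin n → ℝ)
    (φ : ℝ → ℝ) (hφ : ContDiff ℝ (⊤ : ℕ∞) φ)
    (ρ1 ρ2 : ℝ) (hρ1 : 0 < ρ1) (hρ2 : 0 < ρ2)
    (hφ' : ∀ z, ρ1 ≤ deriv φ z)
    (hφ''' : ∀ z, ρ2 ≤ deriv (deriv (deriv φ)) z)
    (β : ℝ) (hβ : 0 < β)
    (hnormal : ∀ z, β * |deriv (deriv φ) z| ≤ (deriv φ z) ^ 2 * deriv (deriv (deriv φ)) z)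
    (θt : ℝ → Param m d)
    (hmem : ∀ t, 0 ≤ t → ∀ i, netF φ x i (θt t) = y i)
    (hflow : ∀ t, 0 ≤ t → HasDerivAt θt (-(rgradG φ x (θt t))) t)
    (t0 : ℝ) (ht0 : 0 ≤ t0)
    (hsmall : ‖rgradG φ x (θt t0)‖ ≤ Real.sqrt μ * β) :
    ∀ t, t0 ≤ t →
      ‖rgradG φ x (θt t)‖ ^ 2
        ≤ ‖rgradG φ x (θt t0)‖ ^ 2 * Real.exp (-((t - t0) * (ρ1 * ρ2 * μ))) :=
  stmt_14_general n m d hm x μ hμ hcoh φ hφ ρ1 ρ2 hρ1 hρ2 hφ' hφ''' β hβ hnormal θt hflow t0 ht0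
    hsmall
end
end

section
/- Suppose φ is infinitely differentiable with φ'(z) > 0 and φ'''(z) ≥ ρ2 > 0 for all z ∈ ℝ. Let θ : [0, ∞) → ℝ^{md} be a Riemannian gradient-flow trajectory of G on the zero-loss set. Then: (a) t ↦ G(θ(t)) is nonincreasing; (b) φ'(θ_j(t) · x_i)² ≤ G(θ(0)) for all t ≥ 0, i ∈ {1,…,n}, j ∈ {1,…,m}; and (c) there exists R > 0 (depending only on φ and G(θ(0))) such that |θ_j(t) · x_i| ≤ R for all t ≥ 0, i, j — i.e., the flow remains in a region where all pre-activations are bounded. -/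
/-!
Since `∇G` is the orthogonal projection of `DG` onto a subspace, `⟪DG, ∇G⟫ = ‖∇G‖²`, so along
the flow `d/dt G(θ(t)) = -‖∇G(θ(t))‖² ≤ 0`. Hence `G` decreases, and each of its summands
`φ'(θ_j · x_i)²` stays below `G(θ(0))`. On the other hand `φ''' ≥ ρ2` makes `φ'` grow quadratically,
`φ'(z) ≥ φ'(0) + φ''(0) z + ρ2 z² / 2`, so the bound `φ'(z) ≤ √G(θ(0))` confines every
pre-activation `z` to a bounded interval.
-/

open scoped RealInnerProductSpace
open Real Filter

noncomputable section

theorem real_inner_orthogonalProjectionOnto_eq_norm_sq {E : Type*} [NormedAddCommGroup E]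
    [InnerProductSpace ℝ E] (K : Submodule ℝ E) [K.HasOrthogonalProjection] (u : E) :
    ⟪u, (K.orthogonalProjectionOnto u : E)⟫ = ‖K.orthogonalProjectionOnto u‖ ^ 2 := by
  rw [real_inner_comm, ← K.starProjection_apply, ← K.re_inner_starProjection_eq_normSq u,
    RCLike.re_to_real]

theorem quadratic_le_of_hasDerivAt_of_le_deriv2 {g g' g'' : ℝ → ℝ} {ρ : ℝ}
    (hg : ∀ w, HasDerivAt g (g' w) w) (hg' : ∀ w, HasDerivAt g' (g'' w) w)
    (hρ : ∀ w, ρ ≤ g'' w) (a z : ℝ) :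
    g a + g' a * (z - a) + ρ / 2 * (z - a) ^ 2 ≤ g z := by
  set k : ℝ → ℝ := fun w => g w - g' a * (w - a) - ρ / 2 * (w - a) ^ 2
  have hk : ∀ w, HasDerivAt k (g' w - g' a - ρ * (w - a)) w := fun w => by
    have := ((hg w).fun_sub (((hasDerivAt_id' w).sub_const a).const_mul (g' a))).fun_sub
      ((((hasDerivAt_id' w).sub_const a).fun_pow 2).const_mul (ρ / 2))
    exact this.congr_deriv (by push_cast; ring)
  have hk' : ∀ w, HasDerivAt (fun w => g' w - g' a - ρ * (w - a)) (g'' w - ρ) w := fun w =>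
    (((hg' w).sub_const (g' a)).fun_sub
      (((hasDerivAt_id' w).sub_const a).const_mul ρ)).congr_deriv (by ring)
  have hconvex : ConvexOn ℝ Set.univ k :=
    convexOn_of_hasDerivWithinAt2_nonneg convex_univ
      (fun w _ => (hk w).continuousAt.continuousWithinAt) (fun w _ => (hk w).hasDerivWithinAt)
      (fun w _ => (hk' w).hasDerivWithinAt) (fun w _ => sub_nonneg.mpr (hρ w))
  have hmin : IsMinOn k Set.univ a := hconvex.isMinOn_of_rightDeriv_eq_zero (by simp) <| by
    rw [(hk a).hasDerivWithinAt.derivWithin (uniqueDiffWithinAt_Ioi a)]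
    ring
  have hka : k a ≤ k z := hmin (Set.mem_univ z)
  simp only [k, sub_self, mul_zero, sub_zero, zero_pow two_ne_zero] at hka
  linarith

theorem abs_le_of_quadratic_le {ρ b c C z : ℝ} (hρ : 0 < ρ) (h : c + b * z + ρ / 2 * z ^ 2 ≤ C) :
    |z| ≤ 1 + 2 * (|b| + |C - c|) / ρ := by
  rcases le_or_gt |z| 1 with hz | hz
  · have : 0 ≤ 2 * (|b| + |C - c|) / ρ := by positivity
    linarith
  · have hlin : -(b * z) ≤ |b| * |z| := (neg_le_abs _).trans (abs_mul b z).le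
    have hconst : C - c ≤ |C - c| * |z| := (le_abs_self _).trans (le_mul_of_one_le_right
      (abs_nonneg _) hz.le)
    have hsq : z ^ 2 = |z| * |z| := (sq_abs z).symm.trans (sq _)
    have : ρ * |z| ≤ 2 * (|b| + |C - c|) := by nlinarith
    have : |z| ≤ 2 * (|b| + |C - c|) / ρ := by rwa [le_div_iff₀ hρ, mul_comm]
    linarith

section Network

/-- Instance search for this through `PiLp` times out. -/
theorem continuousSMul_param (m d : ℕ) : ContinuousSMul ℝ (Param m d) :=
  IsBoundedSMul.continuousSMul

attribute [local instance] continuousSMul_param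

variable {n m d : ℕ} {φ : ℝ → ℝ} {x : Fin n → EuclideanSpace ℝ (Fin d)}

theorem inner_gradRegG (θ v : Param m d) :
    ⟪gradRegG φ x θ, v⟫ =
      ∑ i, ∑ j, 2 * deriv φ ⟪θ j, x i⟫ * deriv (deriv φ) ⟪θ j, x i⟫ * ⟪v j, x i⟫ := by
  rw [PiLp.inner_apply, Finset.sum_comm]
  refine Finset.sum_congr rfl fun j _ => ?_
  simp only [gradRegG, WithLp.ofLp_toLp, sum_inner, real_inner_smul_left]
  exact Finset.sum_congr rfl fun i _ => by rw [real_inner_comm (x i) (v j)]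

theorem hasDerivAt_regG_comp (hφ : Differentiable ℝ (deriv φ)) {γ : ℝ → Param m d}
    {v : Param m d} {t : ℝ} (hγ : HasDerivAt γ v t) :
    HasDerivAt (fun s => regG φ x (γ s)) ⟪gradRegG φ x (γ t), v⟫ t := by
  rw [inner_gradRegG]
  refine HasDerivAt.fun_sum fun i _ => HasDerivAt.fun_sum fun j _ => ?_
  have hpre : HasDerivAt (fun s => ⟪γ s j, x i⟫) ⟪v j, x i⟫ t := by
    have hγj := (PiLp.hasFDerivAt_apply (𝕜 := ℝ) 2 (γ t) j).comp_hasDerivAt t hγ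
    simpa using hγj.inner ℝ (hasDerivAt_const t (x i))
  exact ((hφ _).hasDerivAt.pow 2 |>.comp t hpre).congr_deriv (by push_cast; ring)

theorem hasDerivAt_regG_of_flow (hφ : Differentiable ℝ (deriv φ)) {γ : ℝ → Param m d} {t : ℝ}
    (hγ : HasDerivAt γ (-rgradG φ x (γ t)) t) :
    HasDerivAt (fun s => regG φ x (γ s)) (-‖rgradG φ x (γ t)‖ ^ 2) t := by
  have := hasDerivAt_regG_comp (x := x) hφ hγ
  rwa [inner_neg_right, rgradG, real_inner_orthogonalProjectionOnto_eq_norm_sq] at this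

theorem sq_deriv_le_regG (θ : Param m d) (i : Fin n) (j : Fin m) :
    deriv φ ⟪θ j, x i⟫ ^ 2 ≤ regG φ x θ :=
  calc deriv φ ⟪θ j, x i⟫ ^ 2 ≤ ∑ j, deriv φ ⟪θ j, x i⟫ ^ 2 :=
        Finset.single_le_sum (f := fun j => deriv φ ⟪θ j, x i⟫ ^ 2)
          (fun _ _ => sq_nonneg _) (Finset.mem_univ j)
    _ ≤ regG φ x θ :=
        Finset.single_le_sum (f := fun i => ∑ j, deriv φ ⟪θ j, x i⟫ ^ 2)
          (fun _ _ => Finset.sum_nonneg fun _ _ => sq_nonneg _) (Finset.mem_univ i)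

theorem antitoneOn_regG_of_flow (hφ : Differentiable ℝ (deriv φ)) {γ : ℝ → Param m d}
    (hγ : ∀ t, 0 ≤ t → HasDerivAt γ (-rgradG φ x (γ t)) t) :
    AntitoneOn (fun t => regG φ x (γ t)) (Set.Ici 0) := by
  have hG := fun t (ht : 0 ≤ t) => hasDerivAt_regG_of_flow hφ (hγ t ht)
  refine antitoneOn_of_hasDerivWithinAt_nonpos (convex_Ici 0)
    (fun t ht => (hG t ht).continuousAt.continuousWithinAt)
    (fun t ht => (hG t (interior_subset ht)).hasDerivWithinAt) (fun t _ => ?_)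
  exact neg_nonpos.mpr (sq_nonneg _)

end Network

set_option maxHeartbeats 4000000
set_option synthInstance.maxHeartbeats 400000
theorem stmt_17_general
    (n m d : ℕ)
    (x : Fin n → EuclideanSpace ℝ (Fin d))
    (φ : ℝ → ℝ) (hφ : ContDiff ℝ (⊤ : ℕ∞) φ)
    (ρ2 : ℝ) (hρ2 : 0 < ρ2)
    (hφ''' : ∀ z, ρ2 ≤ deriv (deriv (deriv φ)) z)
    (θt : ℝ → Param m d)
    (hflow : ∀ t, 0 ≤ t → HasDerivAt θt (-(rgradG φ x (θt t))) t) :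
    AntitoneOn (fun t => regG φ x (θt t)) (Set.Ici 0) ∧
    (∀ t, 0 ≤ t → ∀ i j, (deriv φ ⟪θt t j, x i⟫) ^ 2 ≤ regG φ x (θt 0)) ∧
    (∃ R : ℝ, 0 < R ∧ ∀ t, 0 ≤ t → ∀ i j, |⟪θt t j, x i⟫| ≤ R) := by
  have hdiff : ∀ k, Differentiable ℝ (deriv^[k] φ) := fun k =>
    (hφ.iterate_deriv k).differentiable (by simp)
  have hanti := antitoneOn_regG_of_flow (hdiff 1) hflow
  have hbound : ∀ t, 0 ≤ t → ∀ i j, deriv φ ⟪θt t j, x i⟫ ^ 2 ≤ regG φ x (θt 0) :=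
    fun t ht i j => (sq_deriv_le_regG _ i j).trans (hanti Set.self_mem_Ici ht ht)
  refine ⟨hanti, hbound, 1 + 2 * (|deriv (deriv φ) 0| + |√(regG φ x (θt 0)) - deriv φ 0|) / ρ2,
    by positivity, fun t ht i j => abs_le_of_quadratic_le hρ2 ?_⟩
  set z := ⟪θt t j, x i⟫
  calc deriv φ 0 + deriv (deriv φ) 0 * z + ρ2 / 2 * z ^ 2 ≤ deriv φ z := by
        simpa using quadratic_le_of_hasDerivAt_of_le_deriv2 (fun w => (hdiff 1 w).hasDerivAt)
          (fun w => (hdiff 2 w).hasDerivAt) hφ''' 0 z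
    _ ≤ √(regG φ x (θt 0)) := (le_abs_self _).trans (Real.abs_le_sqrt (hbound t ht i j))

/-- along the Riemannian gradient flow, G(θ(t)) is nonincreasing,
φ'(θ_j(t)·x_i)² ≤ G(θ(0)), and all pre-activations remain in a bounded region. -/
theorem stmt_17
    (n m d : ℕ) (hn : 1 ≤ n) (hm : 1 ≤ m) (hd : 1 ≤ d)
    (x : Fin n → EuclideanSpace ℝ (Fin d)) (hx : ∀ i, ‖x i‖ = 1)
    (y : Fin n → ℝ)
    (φ : ℝ → ℝ) (hφ : ContDiff ℝ (⊤ : ℕ∞) φ)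
    (ρ2 : ℝ) (hρ2 : 0 < ρ2)
    (hφ' : ∀ z, 0 < deriv φ z)
    (hφ''' : ∀ z, ρ2 ≤ deriv (deriv (deriv φ)) z)
    (θt : ℝ → Param m d)
    (hmem : ∀ t, 0 ≤ t → ∀ i, netF φ x i (θt t) = y i)
    (hflow : ∀ t, 0 ≤ t → HasDerivAt θt (-(rgradG φ x (θt t))) t) :
    AntitoneOn (fun t => regG φ x (θt t)) (Set.Ici 0) ∧
    (∀ t, 0 ≤ t → ∀ i j, (deriv φ ⟪θt t j, x i⟫) ^ 2 ≤ regG φ x (θt 0)) ∧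
    (∃ R : ℝ, 0 < R ∧ ∀ t, 0 ≤ t → ∀ i j, |⟪θt t j, x i⟫| ≤ R) :=
  stmt_17_general n m d x φ hφ ρ2 hρ2 hφ''' θt hflow
end
end
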